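/- Let (M,g) be a connected 4-dimensional pseudo-Riemannian manifold whose Weyl tensor is nonzero at some point, and suppose σ, σ̄ are two linearly independent solutions of the conformal-to-Einstein equation with σ > 0, so g can be normalized with σ ≡ 1 (g Einstein). If the gradient ∇σ̄ is null everywhere (g(∇σ̄,∇σ̄) = 0) and ∇∇σ̄ + Pσ̄ is pure trace, then Δσ̄ = 0 everywhere on the set where ∇σ̄ ≠ 0, and consequently (by density) everywhere; moreover J^{σ̄} = J σ̄², where J is the trace of the Schouten tensor of g. -/

import Mathlib

noncomputable section

/-- Partial derivative of a function on `ι → ℝ` in the `i`-th coordinate direction. -/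
def pderiv' {ι : Type} [Fintype ι] [DecidableEq ι]
    (i : ι) (f : (ι → ℝ) → ℝ) (x : ι → ℝ) : ℝ :=
  fderiv ℝ f x (Pi.single i 1)

/-- Christoffel symbols `Γ^k_{ij}` of the metric `g` (with pointwise inverse `ginv`). -/
def christoffel {ι : Type} [Fintype ι] [DecidableEq ι]
    (g ginv : (ι → ℝ) → ι → ι → ℝ) (k i j : ι) (x : ι → ℝ) : ℝ :=
  (1/2) * ∑ l, ginv x k l *
    (pderiv' i (fun y => g y l j) x + pderiv' j (fun y => g y l i) x
      - pderiv' l (fun y => g y i j) x)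

/-- Curvature tensor `R^l_{ijk}`, i.e. `R(∂_i,∂_j)∂_k = R^l_{ijk} ∂_l`. -/
def riemUp {ι : Type} [Fintype ι] [DecidableEq ι]
    (g ginv : (ι → ℝ) → ι → ι → ℝ) (l i j k : ι) (x : ι → ℝ) : ℝ :=
  pderiv' i (fun y => christoffel g ginv l j k y) x
    - pderiv' j (fun y => christoffel g ginv l i k y) x
    + ∑ m, christoffel g ginv l i m x * christoffel g ginv m j k x
    - ∑ m, christoffel g ginv l j m x * christoffel g ginv m i k x

/-- Ricci curvature `Ric_{jk} = R^l_{l j k}`. -/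
def ricciT {ι : Type} [Fintype ι] [DecidableEq ι]
    (g ginv : (ι → ℝ) → ι → ι → ℝ) (i j : ι) (x : ι → ℝ) : ℝ :=
  ∑ l, riemUp g ginv l l i j x

/-- Scalar curvature. -/
def scalT {ι : Type} [Fintype ι] [DecidableEq ι]
    (g ginv : (ι → ℝ) → ι → ι → ℝ) (x : ι → ℝ) : ℝ :=
  ∑ i, ∑ j, ginv x i j * ricciT g ginv i j x

/-- Covariant Hessian `∇_i ∇_j σ` of a function. -/
def hessT {ι : Type} [Fintype ι] [DecidableEq ι]
    (g ginv : (ι → ℝ) → ι → ι → ℝ) (σ : (ι → ℝ) → ℝ) (i j : ι) (x : ι → ℝ) : ℝ :=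
  pderiv' i (fun y => pderiv' j σ y) x - ∑ k, christoffel g ginv k i j x * pderiv' k σ x

/-- Laplacian `Δσ = g^{ij} ∇_i∇_j σ`. -/
def lapT {ι : Type} [Fintype ι] [DecidableEq ι]
    (g ginv : (ι → ℝ) → ι → ι → ℝ) (σ : (ι → ℝ) → ℝ) (x : ι → ℝ) : ℝ :=
  ∑ i, ∑ j, ginv x i j * hessT g ginv σ i j x

/-- Schouten tensor `P = (1/(n-2))(Ric - (Sc/(2(n-1))) g)` in dimension `n`. -/
def schoutenT {ι : Type} [Fintype ι] [DecidableEq ι] (n : ℕ)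
    (g ginv : (ι → ℝ) → ι → ι → ℝ) (i j : ι) (x : ι → ℝ) : ℝ :=
  (1/((n:ℝ) - 2)) * (ricciT g ginv i j x - (scalT g ginv x / (2*((n:ℝ) - 1))) * g x i j)

/-- Trace `J = g^{ij} P_{ij}` of the Schouten tensor. -/
def schoutenTr {ι : Type} [Fintype ι] [DecidableEq ι] (n : ℕ)
    (g ginv : (ι → ℝ) → ι → ι → ℝ) (x : ι → ℝ) : ℝ :=
  ∑ i, ∑ j, ginv x i j * schoutenT n g ginv i j x

/-- Lowered curvature tensor `R_{abcd} = g_{cl} R^l_{abd}` (so that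
`[∇_a,∇_b]v^c = R_{ab}{}^c{}_d v^d`). -/
def riemLow {ι : Type} [Fintype ι] [DecidableEq ι]
    (g ginv : (ι → ℝ) → ι → ι → ℝ) (a b c d : ι) (x : ι → ℝ) : ℝ :=
  ∑ l, g x c l * riemUp g ginv l a b d x

/-- Weyl tensor in dimension 4:
`W_{abcd} = R_{abcd} - (g_{ca}P_{bd} - g_{cb}P_{ad}) - (g_{db}P_{ac} - g_{da}P_{bc})`. -/
def weylT (g ginv : (Fin 4 → ℝ) → Fin 4 → Fin 4 → ℝ) (a b c d : Fin 4)
    (x : Fin 4 → ℝ) : ℝ :=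
  riemLow g ginv a b c d x
    - (g x c a * schoutenT 4 g ginv b d x - g x c b * schoutenT 4 g ginv a d x)
    - (g x d b * schoutenT 4 g ginv a c x - g x d a * schoutenT 4 g ginv b c x)

/- ### Auxiliary lemmas -/

section Aux

open Finset Matrix

lemma pderiv'_contDiff {ι : Type} [Fintype ι] [DecidableEq ι]
    {f : (ι → ℝ) → ℝ} (hf : ContDiff ℝ (⊤ : ℕ∞) f) (i : ι) :
    ContDiff ℝ (⊤ : ℕ∞) (fun x => pderiv' i f x) :=
  (hf.fderiv_right (by simp)).clm_apply contDiff_const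

lemma pderiv'_const {ι : Type} [Fintype ι] [DecidableEq ι] (c : ℝ) (a : ι) (x : ι → ℝ) :
    pderiv' a (fun _ => c) x = 0 := by
  unfold pderiv'; rw [fderiv_fun_const]; simp

lemma pderiv'_mul {ι : Type} [Fintype ι] [DecidableEq ι]
    {f h : (ι → ℝ) → ℝ} {x : ι → ℝ} (hf : DifferentiableAt ℝ f x)
    (hh : DifferentiableAt ℝ h x) (a : ι) :
    pderiv' a (fun y => f y * h y) x = pderiv' a f x * h x + f x * pderiv' a h x := by
  unfold pderiv'
  rw [fderiv_fun_mul hf hh]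
  simp; ring

lemma pderiv'_sum {ι κ : Type} [Fintype ι] [DecidableEq ι] [Fintype κ]
    {F : κ → (ι → ℝ) → ℝ} {x : ι → ℝ} (hF : ∀ k, DifferentiableAt ℝ (F k) x) (a : ι) :
    pderiv' a (fun y => ∑ k, F k y) x = ∑ k, pderiv' a (F k) x := by
  unfold pderiv'
  rw [fderiv_fun_sum (fun k _ => hF k)]
  simp

lemma sum4_flatten {ι : Type} [Fintype ι] (F : ι → ι → ι → ι → ℝ) :
    (∑ i, ∑ j, ∑ k, ∑ l, F i j k l) = ∑ p : ι × ι × ι × ι, F p.1 p.2.1 p.2.2.1 p.2.2.2 := by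
  simp [Fintype.sum_prod_type]

lemma sum4_reindex {ι : Type} [Fintype ι] (F : ι → ι → ι → ι → ℝ)
    (e : ι × ι × ι × ι ≃ ι × ι × ι × ι) :
    (∑ i, ∑ j, ∑ k, ∑ l, F i j k l)
      = ∑ i, ∑ j, ∑ k, ∑ l,
          F (e (i,j,k,l)).1 (e (i,j,k,l)).2.1 (e (i,j,k,l)).2.2.1 (e (i,j,k,l)).2.2.2 := by
  rw [sum4_flatten, sum4_flatten]
  exact (Equiv.sum_comp e fun p => F p.1 p.2.1 p.2.2.1 p.2.2.2).symm

/-- The core algebraic identity: differentiating the null condition, using the pure-trace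
Hessian, the metricity of the Christoffel symbols and the derivative of the inverse metric,
yields `f ⬝ U a = 0` where `f` is the Laplacian and `U` the gradient. -/
lemma key_algebra {ι : Type} [Fintype ι] [DecidableEq ι]
    (Gg Gi Gi' : ι → ι → ℝ) (dg : ι → ι → ι → ℝ) (Γ : ι → ι → ℝ)
    (U D : ι → ℝ) (f : ℝ) (a : ι)
    (symGi : ∀ p q, Gi p q = Gi q p)
    (symdg : ∀ m p q, dg m p q = dg m q p)
    (inv1 : ∀ i j, (∑ k, Gg i k * Gi k j) = if i = j then (1:ℝ) else 0)
    (hGi' : ∀ i j, Gi' i j = -∑ k, ∑ l, Gi i k * dg a k l * Gi l j)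
    (hΓ : ∀ k i, Γ k i = (1/2) * ∑ l, Gi k l * (dg a l i + dg i l a - dg l a i))
    (hD : ∀ i, D i = f/4 * Gg a i + ∑ k, Γ k i * U k)
    (hzero : (∑ i, ∑ j, ((Gi' i j * U i + Gi i j * D i) * U j + Gi i j * U i * D j)) = 0) :
    f * U a = 0 := by
  have A1 : ∑ i, ∑ j, Gi i j * Gg a i * U j = U a := by
    rw [Finset.sum_comm]
    have h : ∀ j, ∑ i, Gi i j * Gg a i * U j = (if a = j then (1:ℝ) else 0) * U j := by
      intro j
      rw [show (∑ i, Gi i j * Gg a i * U j) = (∑ i, Gg a i * Gi i j) * U j by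
        rw [Finset.sum_mul]; exact Finset.sum_congr rfl fun i _ => by ring, inv1 a j]
    rw [Finset.sum_congr rfl fun j _ => h j]
    simp
  have A2 : ∑ i, ∑ j, Gi i j * U i * Gg a j = U a := by
    have h : ∀ i, ∑ j, Gi i j * U i * Gg a j = (if a = i then (1:ℝ) else 0) * U i := by
      intro i
      rw [show (∑ j, Gi i j * U i * Gg a j) = (∑ j, Gg a j * Gi j i) * U i by
        rw [Finset.sum_mul]; exact Finset.sum_congr rfl fun j _ => by rw [symGi i j]; ring,
        inv1 a i]
    rw [Finset.sum_congr rfl fun i _ => h i]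
    simp
  have B1 : (∑ i, ∑ j, f/4 * (Gi i j * Gg a i * U j)) = f/4 * U a := by
    simp only [← Finset.mul_sum]; rw [A1]
  have B2 : (∑ i, ∑ j, f/4 * (Gi i j * U i * Gg a j)) = f/4 * U a := by
    simp only [← Finset.mul_sum]; rw [A2]
  have hT'T : (∑ i, ∑ j, Gi i j * U i * (∑ k, Γ k j * U k))
      = ∑ i, ∑ j, Gi i j * (∑ k, Γ k i * U k) * U j := by
    rw [Finset.sum_comm]
    exact Finset.sum_congr rfl fun i _ => Finset.sum_congr rfl fun j _ => by
      rw [symGi j i]; ring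
  have hTpt : ∀ i j, (Gi i j * (∑ k, Γ k i * U k)) * U j
      = ∑ k, ∑ l, ((1/2) * (Gi i j * Gi k l * dg a l i * (U k * U j))
          + (1/2) * (Gi i j * Gi k l * dg i l a * (U k * U j))
          - (1/2) * (Gi i j * Gi k l * dg l a i * (U k * U j))) := by
    intro i j
    rw [show (∑ k, Γ k i * U k)
        = ∑ k, ∑ l, (1/2) * (Gi k l * (dg a l i + dg i l a - dg l a i)) * U k from
      Finset.sum_congr rfl fun k _ => by
        rw [hΓ, Finset.mul_sum, Finset.sum_mul]]
    rw [Finset.mul_sum, Finset.sum_mul]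
    exact Finset.sum_congr rfl fun k _ => by
      rw [Finset.mul_sum, Finset.sum_mul]
      exact Finset.sum_congr rfl fun l _ => by ring
  have hT : (∑ i, ∑ j, Gi i j * (∑ k, Γ k i * U k) * U j)
      = (1/2) * (∑ i, ∑ j, ∑ k, ∑ l, Gi i j * Gi k l * dg a l i * (U k * U j))
        + (1/2) * (∑ i, ∑ j, ∑ k, ∑ l, Gi i j * Gi k l * dg i l a * (U k * U j))
        - (1/2) * (∑ i, ∑ j, ∑ k, ∑ l, Gi i j * Gi k l * dg l a i * (U k * U j)) := by
    rw [Finset.sum_congr rfl fun i _ => Finset.sum_congr rfl fun j _ => hTpt i j]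
    simp only [Finset.sum_add_distrib, Finset.sum_sub_distrib, ← Finset.mul_sum]
  have hS1 : (∑ i, ∑ j, Gi' i j * U i * U j)
      = -(∑ i, ∑ j, ∑ k, ∑ l, Gi i k * dg a k l * Gi l j * (U i * U j)) := by
    have h : ∀ i j, Gi' i j * U i * U j
        = -(∑ k, ∑ l, Gi i k * dg a k l * Gi l j * (U i * U j)) := by
      intro i j
      rw [hGi' i j]
      simp only [neg_mul, neg_inj, Finset.sum_mul]
      exact Finset.sum_congr rfl fun k _ => Finset.sum_congr rfl fun l _ => by ring
    rw [Finset.sum_congr rfl fun i _ => Finset.sum_congr rfl fun j _ => h i j]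
    simp [Finset.sum_neg_distrib]
  have hQAD : (∑ i, ∑ j, ∑ k, ∑ l, Gi i j * Gi k l * dg a l i * (U k * U j))
      = ∑ i, ∑ j, ∑ k, ∑ l, Gi i k * dg a k l * Gi l j * (U i * U j) := by
    rw [sum4_reindex _ ⟨fun p => (p.2.2.2, p.2.1, p.1, p.2.2.1),
      fun p => (p.2.2.1, p.2.1, p.2.2.2, p.1), fun p => rfl, fun p => rfl⟩]
    simp only [Equiv.coe_fn_mk]
    exact Finset.sum_congr rfl fun i _ => Finset.sum_congr rfl fun j _ =>
      Finset.sum_congr rfl fun k _ => Finset.sum_congr rfl fun l _ => by ring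
  have hQBC : (∑ i, ∑ j, ∑ k, ∑ l, Gi i j * Gi k l * dg i l a * (U k * U j))
      = ∑ i, ∑ j, ∑ k, ∑ l, Gi i j * Gi k l * dg l a i * (U k * U j) := by
    rw [sum4_reindex _ ⟨fun p => (p.2.2.2, p.2.2.1, p.2.1, p.1),
      fun p => (p.2.2.2, p.2.2.1, p.2.1, p.1), fun p => rfl, fun p => rfl⟩]
    simp only [Equiv.coe_fn_mk]
    exact Finset.sum_congr rfl fun i _ => Finset.sum_congr rfl fun j _ =>
      Finset.sum_congr rfl fun k _ => Finset.sum_congr rfl fun l _ => by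
        rw [symGi l k, symGi j i, symdg l a i]; ring
  have main : (∑ i, ∑ j, ((Gi' i j * U i + Gi i j * D i) * U j + Gi i j * U i * D j))
      = (∑ i, ∑ j, Gi' i j * U i * U j)
        + (∑ i, ∑ j, f/4 * (Gi i j * Gg a i * U j))
        + (∑ i, ∑ j, Gi i j * (∑ k, Γ k i * U k) * U j)
        + (∑ i, ∑ j, f/4 * (Gi i j * U i * Gg a j))
        + (∑ i, ∑ j, Gi i j * U i * (∑ k, Γ k j * U k)) := by
    simp only [← Finset.sum_add_distrib]
    exact Finset.sum_congr rfl fun i _ => Finset.sum_congr rfl fun j _ => by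
      rw [hD i, hD j]; ring
  rw [main, B1, B2, hT'T, hT, hS1, hQAD, hQBC] at hzero
  linarith [hzero]

end Aux

open Matrix in
/-- on a connected conformally non-flat 4-manifold with Einstein metric `g`
(scale `σ ≡ 1`), if `σ̄` is a further, linearly independent, solution of the
conformal-to-Einstein equation whose gradient is null, then `Δσ̄ = 0` everywhere and
`J^σ̄ = J σ̄²`. -/
theorem null_gradient_einstein_scale
    (g ginv : (Fin 4 → ℝ) → Fin 4 → Fin 4 → ℝ)
    (hgsym : ∀ x i j, g x i j = g x j i)
    (hgsm : ∀ i j, ContDiff ℝ (⊤ : ℕ∞) (fun x => g x i j))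
    (hginvsm : ∀ i j, ContDiff ℝ (⊤ : ℕ∞) (fun x => ginv x i j))
    (hinv : ∀ x i j, ∑ k, g x i k * ginv x k j = if i = j then 1 else 0)
    (lam : ℝ) (hEin : ∀ x i j, ricciT g ginv i j x = lam * g x i j)
    (hWeyl : ∃ x a b c d, weylT g ginv a b c d x ≠ 0)
    (σb : (Fin 4 → ℝ) → ℝ) (hσsm : ContDiff ℝ (⊤ : ℕ∞) σb)
    (hnonconst : ¬ ∃ k : ℝ, ∀ x, σb x = k)
    (hsol : ∀ x i j,
      hessT g ginv σb i j x + schoutenT 4 g ginv i j x * σb x =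
        (1/4) * (lapT g ginv σb x + schoutenTr 4 g ginv x * σb x) * g x i j)
    (hnull : ∀ x, ∑ i, ∑ j, ginv x i j * pderiv' i σb x * pderiv' j σb x = 0) :
    (∀ x, lapT g ginv σb x = 0) ∧
    (∀ x,
      -(2:ℝ) * (∑ i, ∑ j, ginv x i j * pderiv' i σb x * pderiv' j σb x)
          + σb x * lapT g ginv σb x + schoutenTr 4 g ginv x * (σb x)^2 =
        schoutenTr 4 g ginv x * (σb x)^2) := by
  classical
  -- matrix facts
  have hAB : ∀ x, (Matrix.of (g x)) * (Matrix.of (ginv x)) = 1 := by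
    intro x; ext i j
    simpa [Matrix.mul_apply, Matrix.one_apply] using hinv x i j
  have hBA : ∀ x, (Matrix.of (ginv x)) * (Matrix.of (g x)) = 1 :=
    fun x => mul_eq_one_comm.mp (hAB x)
  have hinv2 : ∀ x i j, (∑ k, ginv x i k * g x k j) = if i = j then (1:ℝ) else 0 := by
    intro x i j
    have := congrFun (congrFun (hBA x) i) j
    simpa [Matrix.mul_apply, Matrix.one_apply] using this
  have hginvsym : ∀ x i j, ginv x i j = ginv x j i := by
    intro x i j
    have hAT : (Matrix.of (g x))ᵀ = Matrix.of (g x) := by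
      ext p q; exact hgsym x q p
    have h1 : (Matrix.of (ginv x))ᵀ * (Matrix.of (g x)) = 1 := by
      have h := congrArg Matrix.transpose (hAB x)
      rwa [Matrix.transpose_mul, Matrix.transpose_one, hAT] at h
    have h2 : (Matrix.of (ginv x))ᵀ = Matrix.of (ginv x) := by
      calc (Matrix.of (ginv x))ᵀ
          = (Matrix.of (ginv x))ᵀ * ((Matrix.of (g x)) * (Matrix.of (ginv x))) := by
            rw [hAB x, Matrix.mul_one]
        _ = ((Matrix.of (ginv x))ᵀ * (Matrix.of (g x))) * (Matrix.of (ginv x)) := by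
            rw [Matrix.mul_assoc]
        _ = Matrix.of (ginv x) := by rw [h1, Matrix.one_mul]
    exact (congrFun (congrFun h2 i) j).symm
  -- trace of the metric
  have htr : ∀ x, (∑ i : Fin 4, ∑ j : Fin 4, ginv x i j * g x i j) = 4 := by
    intro x
    have h : ∀ i, (∑ j, ginv x i j * g x i j) = 1 := by
      intro i
      rw [show (∑ j, ginv x i j * g x i j) = ∑ j, ginv x i j * g x j i from
        Finset.sum_congr rfl fun j _ => by rw [hgsym x i j]]
      simpa using hinv2 x i i
    rw [Finset.sum_congr rfl fun i _ => h i]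
    norm_num
  -- Schouten tensor is pure trace
  have hscal : ∀ x, scalT g ginv x = 4 * lam := by
    intro x
    unfold scalT
    rw [show (∑ i, ∑ j, ginv x i j * ricciT g ginv i j x)
        = ∑ i, ∑ j, lam * (ginv x i j * g x i j) from
      Finset.sum_congr rfl fun i _ => Finset.sum_congr rfl fun j _ => by
        rw [hEin x i j]; ring]
    simp only [← Finset.mul_sum]
    rw [htr x]; ring
  have hP : ∀ x i j, schoutenT 4 g ginv i j x = lam/6 * g x i j := by
    intro x i j
    unfold schoutenT
    rw [hEin x i j, hscal x]
    norm_num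
    ring
  have hJ : ∀ x, schoutenTr 4 g ginv x = 2/3 * lam := by
    intro x
    unfold schoutenTr
    rw [show (∑ i, ∑ j, ginv x i j * schoutenT 4 g ginv i j x)
        = ∑ i, ∑ j, lam/6 * (ginv x i j * g x i j) from
      Finset.sum_congr rfl fun i _ => Finset.sum_congr rfl fun j _ => by
        rw [hP x i j]; ring]
    simp only [← Finset.mul_sum]
    rw [htr x]; ring
  -- Hessian is pure trace
  have hhess : ∀ x i j, hessT g ginv σb i j x = lapT g ginv σb x / 4 * g x i j := by
    intro x i j
    have h := hsol x i j
    rw [hP x i j, hJ x] at h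
    linear_combination h
  -- smoothness
  have hu_sm : ∀ i : Fin 4, ContDiff ℝ (⊤ : ℕ∞) (fun x => pderiv' i σb x) :=
    fun i => pderiv'_contDiff hσsm i
  have hdu_sm : ∀ a i : Fin 4, ContDiff ℝ (⊤ : ℕ∞) (fun x => pderiv' a (fun y => pderiv' i σb y) x) :=
    fun a i => pderiv'_contDiff (hu_sm i) a
  have hdg_sm : ∀ a i j : Fin 4, ContDiff ℝ (⊤ : ℕ∞) (fun x => pderiv' a (fun y => g y i j) x) :=
    fun a i j => pderiv'_contDiff (hgsm i j) a
  have hΓ_sm : ∀ k i j : Fin 4, ContDiff ℝ (⊤ : ℕ∞) (fun x => christoffel g ginv k i j x) := by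
    intro k i j
    unfold christoffel
    exact contDiff_const.mul (ContDiff.sum fun l _ => (hginvsm k l).mul
      (((hdg_sm i l j).add (hdg_sm j l i)).sub (hdg_sm l i j)))
  have hlap_sm : ContDiff ℝ (⊤ : ℕ∞) (fun x => lapT g ginv σb x) := by
    unfold lapT hessT
    exact ContDiff.sum fun i _ => ContDiff.sum fun j _ => (hginvsm i j).mul
      ((hdu_sm i j).sub (ContDiff.sum fun k _ => (hΓ_sm k i j).mul (hu_sm k)))
  -- derivative of the inverse metric
  have hder : ∀ (x : Fin 4 → ℝ) (a i j : Fin 4), pderiv' a (fun y => ginv y i j) x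
      = -∑ k, ∑ l, ginv x i k * pderiv' a (fun y => g y k l) x * ginv x l j := by
    intro x a i j
    have step1 : ∀ p q : Fin 4, (∑ k, (pderiv' a (fun y => g y p k) x * ginv x k q
        + g x p k * pderiv' a (fun y => ginv y k q) x)) = 0 := by
      intro p q
      have h0 : pderiv' a (fun y => ∑ k, g y p k * ginv y k q) x = 0 := by
        rw [show (fun y => ∑ k, g y p k * ginv y k q) = fun _ => if p = q then (1:ℝ) else 0
          from funext fun y => hinv y p q]
        by_cases hpq : p = q <;> simp [hpq, pderiv'_const]
      rw [pderiv'_sum (fun k => ((hgsm p k).differentiable (by simp) x).fun_mul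
        ((hginvsm k q).differentiable (by simp) x)) a] at h0
      rw [Finset.sum_congr rfl (fun k _ => pderiv'_mul ((hgsm p k).differentiable (by simp) x)
        ((hginvsm k q).differentiable (by simp) x) a)] at h0
      exact h0
    have step2 : ∀ p : Fin 4, (∑ m, g x p m * pderiv' a (fun y => ginv y m j) x)
        = -∑ l, pderiv' a (fun y => g y p l) x * ginv x l j := by
      intro p
      have h := step1 p j
      rw [Finset.sum_add_distrib] at h
      linarith
    calc pderiv' a (fun y => ginv y i j) x
        = ∑ m, (if i = m then (1:ℝ) else 0) * pderiv' a (fun y => ginv y m j) x := by simp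
      _ = ∑ m, (∑ k, ginv x i k * g x k m) * pderiv' a (fun y => ginv y m j) x :=
          Finset.sum_congr rfl fun m _ => by rw [hinv2 x i m]
      _ = ∑ k, ginv x i k * (∑ m, g x k m * pderiv' a (fun y => ginv y m j) x) := by
          simp only [Finset.sum_mul]
          rw [Finset.sum_comm]
          simp only [Finset.mul_sum]
          exact Finset.sum_congr rfl fun k _ => Finset.sum_congr rfl fun m _ => by ring
      _ = ∑ k, ginv x i k * (-∑ l, pderiv' a (fun y => g y k l) x * ginv x l j) :=
          Finset.sum_congr rfl fun k _ => by rw [step2 k]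
      _ = -∑ k, ∑ l, ginv x i k * pderiv' a (fun y => g y k l) x * ginv x l j := by
          simp only [mul_neg, Finset.mul_sum, Finset.sum_neg_distrib, neg_inj]
          exact Finset.sum_congr rfl fun k _ => Finset.sum_congr rfl fun l _ => by ring
  -- differentiating the null condition
  have hz : ∀ (x : Fin 4 → ℝ) (a : Fin 4),
      (∑ i, ∑ j, ((pderiv' a (fun y => ginv y i j) x * pderiv' i σb x
        + ginv x i j * pderiv' a (fun y => pderiv' i σb y) x) * pderiv' j σb x
        + ginv x i j * pderiv' i σb x * pderiv' a (fun y => pderiv' j σb y) x)) = 0 := by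
    intro x a
    have dprod : ∀ i j : Fin 4, DifferentiableAt ℝ
        (fun y => ginv y i j * pderiv' i σb y * pderiv' j σb y) x := fun i j =>
      (((hginvsm i j).differentiable (by simp) x).mul ((hu_sm i).differentiable (by simp) x)).mul
        ((hu_sm j).differentiable (by simp) x)
    have h0 : pderiv' a (fun y => ∑ i, ∑ j, ginv y i j * pderiv' i σb y * pderiv' j σb y) x
        = 0 := by
      rw [show (fun y => ∑ i, ∑ j, ginv y i j * pderiv' i σb y * pderiv' j σb y)
        = fun _ => (0:ℝ) from funext hnull]
      exact pderiv'_const 0 a x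
    rw [pderiv'_sum (fun i => DifferentiableAt.fun_sum fun j _ => dprod i j) a] at h0
    rw [Finset.sum_congr rfl (fun i _ => pderiv'_sum (fun j => dprod i j) a)] at h0
    rw [Finset.sum_congr rfl (fun i _ => Finset.sum_congr rfl (fun j _ => by
      rw [pderiv'_mul (((hginvsm i j).differentiable (by simp) x).fun_mul
          ((hu_sm i).differentiable (by simp) x)) ((hu_sm j).differentiable (by simp) x) a,
        pderiv'_mul ((hginvsm i j).differentiable (by simp) x)
          ((hu_sm i).differentiable (by simp) x) a]))] at h0
    exact h0
  -- the key pointwise identity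
  have hfU : ∀ (x : Fin 4 → ℝ) (a : Fin 4), lapT g ginv σb x * pderiv' a σb x = 0 := by
    intro x a
    refine key_algebra (fun i j => g x i j) (fun i j => ginv x i j)
      (fun i j => pderiv' a (fun y => ginv y i j) x)
      (fun m p q => pderiv' m (fun y => g y p q) x)
      (fun k i => christoffel g ginv k a i x)
      (fun i => pderiv' i σb x)
      (fun i => pderiv' a (fun y => pderiv' i σb y) x)
      (lapT g ginv σb x) a
      (fun p q => hginvsym x p q)
      (fun m p q => ?_)
      (fun i j => hinv x i j)
      (fun i j => hder x a i j)
      (fun k i => rfl)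
      (fun i => ?_)
      (hz x a)
    · show pderiv' m (fun y => g y p q) x = pderiv' m (fun y => g y q p) x
      rw [show (fun y => g y p q) = (fun y => g y q p) from funext fun y => hgsym y p q]
    · show pderiv' a (fun y => pderiv' i σb y) x
        = lapT g ginv σb x / 4 * g x a i
          + ∑ k, christoffel g ginv k a i x * pderiv' k σb x
      have h := hhess x a i
      unfold hessT at h
      linarith
  -- the Laplacian vanishes everywhere
  have hlap0 : ∀ x, lapT g ginv σb x = 0 := by
    intro x
    by_contra hfx
    have hnb : ∀ᶠ y in nhds x, lapT g ginv σb y ≠ 0 :=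
      hlap_sm.continuous.continuousAt.eventually_ne hfx
    have hu0 : ∀ k : Fin 4, (fun y => pderiv' k σb y) =ᶠ[nhds x] fun _ => (0:ℝ) := by
      intro k
      exact hnb.mono fun y hy => by
        rcases mul_eq_zero.mp (hfU y k) with h | h
        · exact absurd h hy
        · exact h
    have hD0 : ∀ i j : Fin 4, pderiv' i (fun y => pderiv' j σb y) x = 0 := by
      intro i j
      show fderiv ℝ (fun y => pderiv' j σb y) x (Pi.single i 1) = 0
      rw [(hu0 j).fderiv_eq]
      simp
    have hux : ∀ k : Fin 4, pderiv' k σb x = 0 := fun k => (hu0 k).eq_of_nhds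
    apply hfx
    show (∑ i, ∑ j, ginv x i j * hessT g ginv σb i j x) = 0
    unfold hessT
    simp [hD0, hux]
  refine ⟨hlap0, fun x => ?_⟩
  rw [hnull x, hlap0 x]
  ring
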